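/- Let p : S → ℙ² be a generic covering of degree ν with branch curve B having c cusps and n nodes, and ramification curve R mapping bijectively to B away from singular points. Counting points over strata: over each point of ℙ² ∖ B there are ν points of S; over a regular point of B there are ν−1 points of S and 1 of R; over a node, ν−2 points of S and 2 of R; over a cusp, ν−2 points of S and 1 of R. Then the Euler characteristics satisfy χ_top(S) + χ_top(R) = 3ν − c, hence c = 3ν − χ_top(R) − χ_top(S). -/
import Mathlib


/-- Stratified Euler-characteristic count for a generic covering `p : S → ℙ²` of degree
`ν` with branch curve `B` having `n` nodes and `c` cusps.  Writing `χ₀` for the Euler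
characteristic of `ℙ² ∖ B` and `χreg` for that of the smooth locus of `B`, additivity
gives `χ(ℙ²) = χ₀ + χreg + n + c = 3`, while counting preimage points over each stratum
gives `χ(S) = ν·χ₀ + (ν−1)·χreg + (ν−2)·n + (ν−2)·c` and
`χ(R) = χreg + 2n + c`.  Then `χ(S) + χ(R) = 3ν − c`, hence `c = 3ν − χ(R) − χ(S)`. -/
theorem cusp_count_from_euler_chars
    (ν n c χ₀ χreg χS χR : ℤ)
    (hP2 : χ₀ + χreg + n + c = 3)
    (hS : χS = ν * χ₀ + (ν - 1) * χreg + (ν - 2) * n + (ν - 2) * c)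
    (hR : χR = χreg + 2 * n + c) :
    χS + χR = 3 * ν - c ∧ c = 3 * ν - χR - χS := by
  subst hS hR; constructor <;> linear_combination ν * hP2
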